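/- arXiv:2209.05050 — 3 statements merged into one kernel-verified Lean document; each statement's English description precedes it below -/
import Mathlib

section
/- Let O be a perfect F_p-algebra in which v is a nonzerodivisor and suppose W(O)/[v] is p-torsionfree. Let A be any Z_p-module. Then W(O) ⊗_{Z_p} A is [v]-torsionfree. -/
set_option maxHeartbeats 1000000
set_option synthInstance.maxHeartbeats 200000

open TensorProduct LinearMap

namespace Stmt7Aux

variable {p : ℕ} [hp : Fact p.Prime]

lemma pow_regular {O : Type*} [CommRing O] {w : O} (hw : ∀ a : O, w * a = 0 → a = 0) :
    ∀ (m : ℕ) (a : O), w ^ m * a = 0 → a = 0 := by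
  intro m
  induction m with
  | zero => intro a ha; simpa using ha
  | succ m ihm =>
    intro a ha
    refine ihm a (hw _ ?_)
    rw [← mul_assoc, ← pow_succ']
    exact ha

lemma frobenius_teichmuller {O : Type*} [CommRing O] [CharP O p] (w : O) :
    WittVector.frobenius (WittVector.teichmuller p w) = WittVector.teichmuller p (w ^ p) := by
  ext n
  rw [WittVector.coeff_frobenius_charP]
  cases n with
  | zero => rw [WittVector.teichmuller_coeff_zero, WittVector.teichmuller_coeff_zero]
  | succ n =>
    rw [WittVector.teichmuller_coeff_pos p w (n + 1) n.succ_pos,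
      WittVector.teichmuller_coeff_pos p (w ^ p) (n + 1) n.succ_pos,
      zero_pow hp.out.ne_zero]

lemma teichmuller_regular {O : Type*} [CommRing O] [CharP O p] :
    ∀ (n : ℕ) (w : O), (∀ a : O, w * a = 0 → a = 0) →
      ∀ x : WittVector p O, WittVector.teichmuller p w * x = 0 → x.coeff n = 0 := by
  intro n
  induction n with
  | zero =>
    intro w hw x hx
    apply hw
    rw [← WittVector.teichmuller_coeff_zero (p := p) w, ← WittVector.mul_coeff_zero, hx,
      WittVector.zero_coeff]
  | succ n ih =>
    intro w hw x hx
    have h0 : x.coeff 0 = 0 := by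
      apply hw
      rw [← WittVector.teichmuller_coeff_zero (p := p) w, ← WittVector.mul_coeff_zero, hx,
        WittVector.zero_coeff]
    have hV : x = WittVector.verschiebung (x.shift 1) := by
      have := WittVector.eq_iterate_verschiebung (x := x) (n := 1) (fun i hi => by
        interval_cases i; exact h0)
      simpa using this
    have key : WittVector.verschiebung
        ((x.shift 1) * WittVector.frobenius (WittVector.teichmuller p w)) = 0 := by
      rw [WittVector.verschiebung_mul_frobenius, ← hV, mul_comm, hx]
    have hz : WittVector.teichmuller p (w ^ p) * (x.shift 1) = 0 := by
      rw [← frobenius_teichmuller, mul_comm]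
      ext k
      have hk := congrArg (fun z : WittVector p O => z.coeff (k + 1)) key
      simpa [WittVector.verschiebung_coeff_succ] using hk
    have := ih (w ^ p) (pow_regular hw p) (x.shift 1) hz
    simpa [WittVector.shift_coeff, Nat.add_comm] using this

lemma rTensor_lTensor_comm {R X Y K F : Type*} [CommRing R]
    [AddCommGroup X] [AddCommGroup Y] [AddCommGroup K] [AddCommGroup F]
    [Module R X] [Module R Y] [Module R K] [Module R F]
    (φ : X →ₗ[R] Y) (ψ : K →ₗ[R] F) (z : X ⊗[R] K) :
    φ.rTensor F (ψ.lTensor X z) = ψ.lTensor Y (φ.rTensor K z) := by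
  induction z with
  | zero => simp
  | tmul x k => simp
  | add u w hu hw => simp [map_add, hu, hw]

/-- If a short exact sequence has flat cokernel, then tensoring the injection stays injective
(`Tor₁` vanishing). -/
lemma rTensor_injective_of_flat_coker {R : Type*} [CommRing R]
    {N M Q A K F : Type*} [AddCommGroup N] [AddCommGroup M] [AddCommGroup Q] [AddCommGroup A]
    [AddCommGroup K] [AddCommGroup F]
    [Module R N] [Module R M] [Module R Q] [Module R A] [Module R K] [Module R F]
    [Module.Flat R Q] [Module.Flat R F] (f : N →ₗ[R] M) (g : M →ₗ[R] Q)
    (hf : Function.Injective f) (hfg : Function.Exact f g) (hg : Function.Surjective g)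
    (ι : K →ₗ[R] F) (π : F →ₗ[R] A)
    (hι : Function.Injective ι) (hιπ : Function.Exact ι π) (hπ : Function.Surjective π) :
    Function.Injective (f.rTensor A) := by
  have main : ∀ t : N ⊗[R] A, f.rTensor A t = 0 → t = 0 := by
    intro t htz
    -- lift t to N ⊗ F
    obtain ⟨u, hu⟩ := LinearMap.lTensor_surjective N hπ t
    -- (f ⊗ 1) u dies in M ⊗ A
    have h1 : π.lTensor M (f.rTensor F u) = 0 := by
      rw [← rTensor_lTensor_comm f π u, hu, htz]
    -- so it comes from M ⊗ K
    have h2 : f.rTensor F u ∈ LinearMap.range (ι.lTensor M) := by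
      have hexM : Function.Exact (ι.lTensor M) (π.lTensor M) := lTensor_exact M hιπ hπ
      exact (hexM _).mp h1
    obtain ⟨k, hk⟩ := h2
    -- its image in Q ⊗ K is zero by flatness of Q
    have h3 : ι.lTensor Q (g.rTensor K k) = 0 := by
      rw [← rTensor_lTensor_comm g ι k, hk, ← LinearMap.rTensor_comp_apply]
      have hz : g.comp f = 0 := by
        ext x
        simpa using hfg.apply_apply_eq_zero x
      rw [hz, LinearMap.rTensor_zero, LinearMap.zero_apply]
    have h4 : g.rTensor K k = 0 :=
      Module.Flat.lTensor_preserves_injective_linearMap (M := Q) ι hι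
        (by simpa using h3)
    -- so k comes from N ⊗ K
    have hexK : Function.Exact (f.rTensor K) (g.rTensor K) := rTensor_exact K hfg hg
    obtain ⟨k', hk'⟩ := (hexK k).mp h4
    -- injectivity over the flat module F
    have h5 : f.rTensor F (ι.lTensor N k') = f.rTensor F u := by
      rw [rTensor_lTensor_comm f ι k', hk', hk]
    have hFinj : Function.Injective (f.rTensor F) :=
      Module.Flat.rTensor_preserves_injective_linearMap (M := F) f hf
    have h6 : ι.lTensor N k' = u := hFinj h5
    -- conclude
    have h7 : π.lTensor N (ι.lTensor N k') = 0 := by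
      rw [← LinearMap.lTensor_comp_apply]
      have hz : π.comp ι = 0 := by
        ext x
        simpa using hιπ.apply_apply_eq_zero x
      rw [hz, LinearMap.lTensor_zero, LinearMap.zero_apply]
    rw [← hu, ← h6, h7]
  intro a b hab
  have := main (a - b) (by rw [map_sub, hab, sub_self])
  exact sub_eq_zero.mp this

lemma flat_of_p_regular {Q : Type*} [AddCommGroup Q] [Module ℤ_[p] Q]
    (h : ∀ q : Q, (p : ℤ_[p]) • q = 0 → q = 0) : Module.Flat ℤ_[p] Q := by
  rw [Module.Flat.iff_rTensor_injective']
  intro I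
  rcases eq_or_ne I ⊥ with rfl | hI
  · have hsub : ∀ z : ((⊥ : Ideal ℤ_[p]) ⊗[ℤ_[p]] Q), z = 0 := by
      intro z
      induction z with
      | zero => rfl
      | tmul x q =>
        have hx : x = 0 := Subsingleton.elim _ _
        rw [hx, zero_tmul]
      | add x y hx hy => rw [hx, hy, add_zero]
    intro a b _
    rw [hsub a, hsub b]
  · obtain ⟨n, rfl⟩ := PadicInt.ideal_eq_span_pow_p hI
    have hpne : (p : ℤ_[p]) ≠ 0 := Nat.cast_ne_zero.mpr hp.out.ne_zero
    set a : ℤ_[p] := (p : ℤ_[p]) ^ n with ha_def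
    have ha : a ≠ 0 := pow_ne_zero _ hpne
    have hreg : ∀ (m : ℕ) (q : Q), ((p : ℤ_[p]) ^ m) • q = 0 → q = 0 := by
      intro m
      induction m with
      | zero => intro q hq; simpa using hq
      | succ m ihm =>
        intro q hq
        refine ihm q (h _ ?_)
        rw [← mul_smul, ← pow_succ']
        exact hq
    set I : Ideal ℤ_[p] := Ideal.span {a} with hI_def
    set e : ℤ_[p] ≃ₗ[ℤ_[p]] I :=
      LinearEquiv.toSpanNonzeroSingleton ℤ_[p] ℤ_[p] a ha with he_def
    set φ : ℤ_[p] →ₗ[ℤ_[p]] ℤ_[p] := I.subtype ∘ₗ e.toLinearMap with hφ_def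
    have hφ_apply : ∀ (z : ℤ_[p] ⊗[ℤ_[p]] Q),
        (TensorProduct.lid ℤ_[p] Q) (φ.rTensor Q z) = a • (TensorProduct.lid ℤ_[p] Q) z := by
      intro z
      induction z with
      | zero => simp
      | tmul r q =>
        have hr : φ r = r * a := rfl
        simp [LinearMap.rTensor_tmul, hr, mul_smul, mul_comm r a]
      | add x y hx hy => simp [map_add, hx, hy, smul_add]
    have hφinj : Function.Injective (φ.rTensor Q) := by
      intro x y hxy
      apply (TensorProduct.lid ℤ_[p] Q).injective
      have h1 := congrArg (TensorProduct.lid ℤ_[p] Q) hxy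
      rw [hφ_apply, hφ_apply] at h1
      have h2 := hreg n ((TensorProduct.lid ℤ_[p] Q) x - (TensorProduct.lid ℤ_[p] Q) y)
        (by rw [smul_sub, h1, sub_self])
      exact sub_eq_zero.mp h2
    intro x y hxy
    obtain ⟨x', rfl⟩ := LinearMap.rTensor_surjective Q (g := e.toLinearMap) e.surjective x
    obtain ⟨y', rfl⟩ := LinearMap.rTensor_surjective Q (g := e.toLinearMap) e.surjective y
    have : φ.rTensor Q x' = φ.rTensor Q y' := by
      rw [hφ_def, LinearMap.rTensor_comp]
      exact hxy
    rw [hφinj this]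

end Stmt7Aux

/-- Let `O` be a perfect `𝔽_p`-algebra in which `v` is a nonzerodivisor and suppose
`W(O)/[v]` is `p`-torsionfree.  Then for any `ℤ_p`-module `A`, the tensor product
`W(O) ⊗_{ℤ_p} A` is `[v]`-torsionfree. -/
theorem stmt_7 (p : ℕ) [Fact p.Prime] (O : Type*) [CommRing O] [CharP O p]
    [PerfectRing O p] (v : O) (hv : ∀ a : O, v * a = 0 → a = 0)
    [Module ℤ_[p] (WittVector p O)]
    [SMulCommClass ℤ_[p] (WittVector p O) (WittVector p O)]
    [IsScalarTower ℤ_[p] (WittVector p O) (WittVector p O)]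
    (htf : ∀ x : WittVector p O,
      (∃ y : WittVector p O, (p : WittVector p O) * x = WittVector.teichmuller p v * y) →
      ∃ z : WittVector p O, x = WittVector.teichmuller p v * z)
    (A : Type*) [AddCommGroup A] [Module ℤ_[p] A] :
    ∀ t : WittVector p O ⊗[ℤ_[p]] A, WittVector.teichmuller p v • t = 0 → t = 0 := by
  classical
  set τ : WittVector p O := WittVector.teichmuller p v with hτ_def
  have hτreg : ∀ x : WittVector p O, τ * x = 0 → x = 0 := fun x hx =>
    WittVector.ext fun n => by
      rw [Stmt7Aux.teichmuller_regular n v hv x hx, WittVector.zero_coeff]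
  set f : WittVector p O →ₗ[ℤ_[p]] WittVector p O := LinearMap.mulLeft ℤ_[p] τ with hf_def
  have hf : Function.Injective f := by
    intro x y hxy
    have h1 : τ * (x - y) = 0 := by
      have : τ * x = τ * y := hxy
      rw [mul_sub, this, sub_self]
    have := hτreg _ h1
    exact sub_eq_zero.mp this
  have hflat : Module.Flat ℤ_[p] (WittVector p O ⧸ LinearMap.range f) := by
    apply Stmt7Aux.flat_of_p_regular
    intro q hq
    obtain ⟨x, rfl⟩ := Submodule.Quotient.mk_surjective _ q
    rw [← Submodule.Quotient.mk_smul, Submodule.Quotient.mk_eq_zero] at hq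
    obtain ⟨y, hy⟩ := hq
    have hcast : (p : ℤ_[p]) • x = (p : WittVector p O) * x := by
      rw [show ((p : ℤ_[p])) = ((p : ℕ) : ℤ_[p]) by norm_cast, Nat.cast_smul_eq_nsmul,
        nsmul_eq_mul]
    obtain ⟨z, hz⟩ := htf x ⟨y, by rw [← hcast, ← hy]; rfl⟩
    rw [Submodule.Quotient.mk_eq_zero]
    exact ⟨z, hz.symm⟩
  haveI := hflat
  have hinj : Function.Injective (f.rTensor A) :=
    Stmt7Aux.rTensor_injective_of_flat_coker
      (K := LinearMap.ker (Finsupp.linearCombination ℤ_[p] (_root_.id : A → A)))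
      (F := A →₀ ℤ_[p])
      f ((LinearMap.range f).mkQ) hf (LinearMap.exact_map_mkQ_range f)
      (Submodule.mkQ_surjective _)
      (Submodule.subtype _) (Finsupp.linearCombination ℤ_[p] (_root_.id : A → A))
      (Submodule.injective_subtype _)
      (LinearMap.exact_subtype_ker_map _)
      (Finsupp.linearCombination_id_surjective ℤ_[p] A)
  intro t ht
  have hsmul : ∀ s : WittVector p O ⊗[ℤ_[p]] A, τ • s = f.rTensor A s := by
    intro s
    induction s with
    | zero => simp
    | tmul x a =>
      rw [smul_tmul', LinearMap.rTensor_tmul]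
      rfl
    | add u w hu hw => rw [smul_add, map_add, hu, hw]
  apply hinj
  rw [map_zero, ← hsmul t]
  exact ht
end

section
/- Let R be a topological commutative ring equipped with a continuous endomorphism φ whose linearization is invertible on modules. Let M be a finitely generated projective étale φ-module over R. Then there exists a finite free étale φ-module F over R such that M is a direct summand of F as an étale φ-module. -/
open TensorProduct

variable {R : Type*} [CommRing R]

/-- `R` viewed as a module over itself via the ring endomorphism `φ`
(the `φ`-twist used to form the base change `φ*M`). -/
def Tw (_φ : R →+* R) : Type _ := R

/-- The identity, unwrapping the twist. -/
def Tw.val {φ : R →+* R} (s : Tw φ) : R := s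

instance (φ : R →+* R) : AddCommGroup (Tw φ) := inferInstanceAs (AddCommGroup R)
instance (φ : R →+* R) : Module R (Tw φ) := Module.compHom R φ

/-- The linearization `φ*M = R ⊗_{R,φ} M → M`, `s ⊗ m ↦ s • F m`, of a `φ`-semilinear
map `F : M → M`.  The `φ`-module `(M, F)` is *étale* precisely when this map is
bijective. -/
noncomputable def phiLin (φ : R →+* R) {M : Type*} [AddCommGroup M] [Module R M]
    (F : M →ₛₗ[φ] M) : Tw φ ⊗[R] M →+ M :=
  TensorProduct.liftAddHom
    { toFun := fun s => AddMonoidHom.mk' (fun m => s.val • F m)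
        (fun a b => by simp [smul_add])
      map_zero' := by ext m; exact zero_smul R (F m)
      map_add' := fun a b => by ext m; exact add_smul a.val b.val (F m) }
    (fun r s m => by
      show (r • s).val • F m = s.val • F (r • m)
      have h1 : (r • s).val = φ r * s.val := rfl
      rw [h1, F.map_smulₛₗ, smul_smul, mul_comm])

section Aux

variable (φ : R →+* R)

/-- Build an element of the twist. -/
def Tw.of (r : R) : Tw φ := r

lemma Tw.smul_def' (r : R) (s : Tw φ) : r • s = Tw.of φ (φ r * s.val) := rfl

lemma Tw.val_of (r : R) : (Tw.of φ r).val = r := rfl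

lemma phiLin_tmul {M : Type*} [AddCommGroup M] [Module R M] (F : M →ₛₗ[φ] M)
    (s : Tw φ) (m : M) : phiLin φ F (s ⊗ₜ[R] m) = s.val • F m := by
  simp [phiLin]

/-- coordinatewise Frobenius on a free module -/
def Frob (n : ℕ) : (Fin n → R) →ₛₗ[φ] (Fin n → R) where
  toFun v := fun i => φ (v i)
  map_add' v w := by funext i; simp
  map_smul' r v := by funext i; simp [smul_eq_mul, map_mul]

lemma frob_single (n : ℕ) (j : Fin n) :
    (fun i => φ ((Pi.single j (1 : R) : Fin n → R) i)) = Pi.single j (1 : R) := by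
  funext i
  rcases eq_or_ne i j with h | h
  · subst h; simp
  · simp [Pi.single_apply, h]

/-- linearization of a semilinear map out of a free module -/
def linz {n : ℕ} {N : Type*} [AddCommGroup N] [Module R N]
    (T : (Fin n → R) →ₛₗ[φ] N) : (Fin n → R) →ₗ[R] N where
  toFun v := ∑ j, v j • T (Pi.single j 1)
  map_add' v w := by simp [add_smul, Finset.sum_add_distrib]
  map_smul' r v := by simp [smul_smul, Finset.smul_sum]

lemma linz_frob {n : ℕ} {N : Type*} [AddCommGroup N] [Module R N]
    (T : (Fin n → R) →ₛₗ[φ] N) (v : Fin n → R) :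
    linz φ T (fun i => φ (v i)) = T v := by
  conv_rhs => rw [← Finset.univ_sum_single v]
  rw [map_sum]
  show ∑ j, φ (v j) • T (Pi.single j 1) = _
  refine Finset.sum_congr rfl fun j _ => ?_
  have : (Pi.single j (v j) : Fin n → R) = v j • (Pi.single j (1:R) : Fin n → R) := by
    funext i; rcases eq_or_ne i j with h | h
    · subst h; simp
    · simp [Pi.single_apply, h]
  rw [this, T.map_smulₛₗ]

lemma linz_single {n : ℕ} {N : Type*} [AddCommGroup N] [Module R N]
    (T : (Fin n → R) →ₛₗ[φ] N) (j : Fin n) (x : R) :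
    linz φ T (Pi.single j x) = x • T (Pi.single j 1) := by
  have : (Pi.single j x : Fin n → R) = x • (Pi.single j (1:R) : Fin n → R) := by
    funext i; rcases eq_or_ne i j with h | h
    · subst h; simp
    · simp [Pi.single_apply, h]
  rw [this, map_smul]
  congr 1
  conv_lhs => rw [← frob_single φ n j]
  rw [linz_frob]

end Aux

section Frob2

variable (φ : R →+* R)

/-- Frobenius on a product of two free modules -/
def Frob2 (n : ℕ) :
    ((Fin n → R) × (Fin n → R)) →ₛₗ[φ] ((Fin n → R) × (Fin n → R)) where
  toFun p := (Frob φ n p.1, Frob φ n p.2)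
  map_add' p q := by simp [Prod.ext_iff]
  map_smul' r p := by simp [Prod.ext_iff]

lemma single_smul_one {n : ℕ} (j : Fin n) (x : R) :
    (Pi.single j x : Fin n → R) = x • (Pi.single j (1:R) : Fin n → R) := by
  funext i
  rcases eq_or_ne i j with h | h
  · subst h; simp
  · simp [Pi.single_apply, h]

lemma sum_single_prod {n : ℕ} (p : (Fin n → R) × (Fin n → R)) :
    ((∑ j, ((Pi.single j (p.1 j) : Fin n → R), (0 : Fin n → R)))
      + ∑ j, ((0 : Fin n → R), (Pi.single j (p.2 j) : Fin n → R))) = p := by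
  have e1 : (∑ j, ((Pi.single j (p.1 j) : Fin n → R), (0 : Fin n → R)))
      = (p.1, (0 : Fin n → R)) := by
    rw [Prod.ext_iff]
    constructor
    · rw [Prod.fst_sum]; simpa using Finset.univ_sum_single p.1
    · rw [Prod.snd_sum]; simp
  have e2 : (∑ j, ((0 : Fin n → R), (Pi.single j (p.2 j) : Fin n → R)))
      = ((0 : Fin n → R), p.2) := by
    rw [Prod.ext_iff]
    constructor
    · rw [Prod.fst_sum]; simp
    · rw [Prod.snd_sum]; simpa using Finset.univ_sum_single p.2
  rw [e1, e2]
  ext i <;> simp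

/-- explicit inverse of the linearization of `Frob2` -/
noncomputable def Psi (n : ℕ) (p : (Fin n → R) × (Fin n → R)) :
    Tw φ ⊗[R] ((Fin n → R) × (Fin n → R)) :=
  (∑ j, (Tw.of φ (p.1 j)) ⊗ₜ[R] ((Pi.single j (1:R) : Fin n → R), (0 : Fin n → R)))
    + ∑ j, (Tw.of φ (p.2 j)) ⊗ₜ[R] ((0 : Fin n → R), (Pi.single j (1:R) : Fin n → R))

lemma Psi_rightInv (n : ℕ) (p : (Fin n → R) × (Fin n → R)) :
    phiLin φ (Frob2 φ n) (Psi φ n p) = p := by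
  rw [Psi, map_add, map_sum, map_sum]
  have h1 : ∀ j : Fin n,
      phiLin φ (Frob2 φ n) ((Tw.of φ (p.1 j)) ⊗ₜ[R]
        ((Pi.single j (1:R) : Fin n → R), (0 : Fin n → R)))
      = ((Pi.single j (p.1 j) : Fin n → R), (0 : Fin n → R)) := by
    intro j
    rw [phiLin_tmul]
    show p.1 j • ((fun i => φ ((Pi.single j (1:R) : Fin n → R) i), fun i => φ ((0 : Fin n → R) i))
      : (Fin n → R) × (Fin n → R)) = _
    rw [frob_single]
    ext i
    · rcases eq_or_ne i j with h | h
      · subst h; simp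
      · simp [Pi.single_apply, h]
    · simp
  have h2 : ∀ j : Fin n,
      phiLin φ (Frob2 φ n) ((Tw.of φ (p.2 j)) ⊗ₜ[R]
        ((0 : Fin n → R), (Pi.single j (1:R) : Fin n → R)))
      = ((0 : Fin n → R), (Pi.single j (p.2 j) : Fin n → R)) := by
    intro j
    rw [phiLin_tmul]
    show p.2 j • ((fun i => φ ((0 : Fin n → R) i), fun i => φ ((Pi.single j (1:R) : Fin n → R) i))
      : (Fin n → R) × (Fin n → R)) = _
    rw [frob_single]
    ext i
    · simp
    · rcases eq_or_ne i j with h | h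
      · subst h; simp
      · simp [Pi.single_apply, h]
  simp only [h1, h2]
  exact sum_single_prod p

lemma Psi_add (n : ℕ) (p q : (Fin n → R) × (Fin n → R)) :
    Psi φ n (p + q) = Psi φ n p + Psi φ n q := by
  simp only [Psi, Prod.fst_add, Prod.snd_add]
  have hof : ∀ a b : R, Tw.of φ (a + b) = Tw.of φ a + Tw.of φ b := fun _ _ => rfl
  simp only [Pi.add_apply, hof, add_tmul, Finset.sum_add_distrib]
  abel

lemma Psi_leftInv (n : ℕ) (t : Tw φ ⊗[R] ((Fin n → R) × (Fin n → R))) :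
    Psi φ n (phiLin φ (Frob2 φ n) t) = t := by
  induction t using TensorProduct.induction_on with
  | zero =>
    have h0 : Tw.of φ (0:R) = (0 : Tw φ) := rfl
    simp [map_zero, Psi, h0]
  | add x y hx hy => rw [map_add, Psi_add, hx, hy]
  | tmul σ p =>
    rw [phiLin_tmul]
    rw [Psi]
    have hs1 : ∀ j : Fin n, Tw.of φ ((σ.val • (Frob2 φ n) p).1 j) = p.1 j • σ := by
      intro j
      show Tw.of φ (σ.val * φ (p.1 j)) = _
      rw [Tw.smul_def' φ (p.1 j) σ]
      exact congrArg (Tw.of φ) (mul_comm _ _)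
    have hs2 : ∀ j : Fin n, Tw.of φ ((σ.val • (Frob2 φ n) p).2 j) = p.2 j • σ := by
      intro j
      show Tw.of φ (σ.val * φ (p.2 j)) = _
      rw [Tw.smul_def' φ (p.2 j) σ]
      exact congrArg (Tw.of φ) (mul_comm _ _)
    simp only [hs1, hs2]
    have t1 : ∀ j : Fin n,
        (p.1 j • σ) ⊗ₜ[R] ((Pi.single j (1:R) : Fin n → R), (0 : Fin n → R))
        = σ ⊗ₜ[R] (((Pi.single j (p.1 j) : Fin n → R), (0 : Fin n → R))
            : (Fin n → R) × (Fin n → R)) := by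
      intro j
      rw [TensorProduct.smul_tmul]
      congr 1
      ext i
      · rcases eq_or_ne i j with h | h
        · subst h; simp
        · simp [Pi.single_apply, h]
      · simp
    have t2 : ∀ j : Fin n,
        (p.2 j • σ) ⊗ₜ[R] ((0 : Fin n → R), (Pi.single j (1:R) : Fin n → R))
        = σ ⊗ₜ[R] ((((0 : Fin n → R)), (Pi.single j (p.2 j) : Fin n → R))
            : (Fin n → R) × (Fin n → R)) := by
      intro j
      rw [TensorProduct.smul_tmul]
      congr 1
      ext i
      · simp
      · rcases eq_or_ne i j with h | h
        · subst h; simp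
        · simp [Pi.single_apply, h]
    simp only [t1, t2, ← TensorProduct.tmul_sum, ← TensorProduct.tmul_add]
    rw [sum_single_prod p]

lemma Frob2_bijective (n : ℕ) : Function.Bijective (phiLin φ (Frob2 φ n)) :=
  Function.bijective_iff_has_inverse.2
    ⟨Psi φ n, Psi_leftInv φ n, Psi_rightInv φ n⟩

/-- linearization of `C ∘ Frob2` -/
lemma phiLin_comp {n : ℕ}
    (C : ((Fin n → R) × (Fin n → R)) →ₗ[R] ((Fin n → R) × (Fin n → R)))
    (t : Tw φ ⊗[R] ((Fin n → R) × (Fin n → R))) :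
    phiLin φ (C.comp (Frob2 φ n)) t = C (phiLin φ (Frob2 φ n) t) := by
  induction t using TensorProduct.induction_on with
  | zero => simp
  | add x y hx hy => simp [map_add, hx, hy]
  | tmul σ p => rw [phiLin_tmul, phiLin_tmul, LinearMap.comp_apply, map_smul]

end Frob2

section Core

variable (φ : R →+* R) {M : Type*} [AddCommGroup M] [Module R M]

lemma Frob_apply (n : ℕ) (v : Fin n → R) : Frob φ n v = fun i => φ (v i) := rfl

/-- the semilinear map `v ↦ s (FM (π₀ v))` -/
def TD (FM : M →ₛₗ[φ] M) {n : ℕ} (s : M →ₗ[R] (Fin n → R))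
    (π₀ : (Fin n → R) →ₗ[R] M) : (Fin n → R) →ₛₗ[φ] (Fin n → R) where
  toFun v := s (FM (π₀ v))
  map_add' v w := by simp
  map_smul' r v := by simp [LinearMap.map_smulₛₗ]

/-- the semilinear map `v ↦ Frob (s (π₀ v))` -/
def Tq {n : ℕ} (s : M →ₗ[R] (Fin n → R))
    (π₀ : (Fin n → R) →ₗ[R] M) : (Fin n → R) →ₛₗ[φ] (Fin n → R) where
  toFun v := Frob φ n (s (π₀ v))
  map_add' v w := by simp
  map_smul' r v := by simp [LinearMap.map_smulₛₗ]

noncomputable def Dmap (FM : M →ₛₗ[φ] M) {n : ℕ} (s : M →ₗ[R] (Fin n → R))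
    (π₀ : (Fin n → R) →ₗ[R] M) : (Fin n → R) →ₗ[R] (Fin n → R) :=
  linz φ (TD φ FM s π₀)

noncomputable def qmap {n : ℕ} (s : M →ₗ[R] (Fin n → R))
    (π₀ : (Fin n → R) →ₗ[R] M) : (Fin n → R) →ₗ[R] (Fin n → R) :=
  linz φ (Tq φ s π₀)

lemma Dmap_frob (FM : M →ₛₗ[φ] M) {n : ℕ} (s : M →ₗ[R] (Fin n → R))
    (π₀ : (Fin n → R) →ₗ[R] M) (v : Fin n → R) :
    Dmap φ FM s π₀ (Frob φ n v) = s (FM (π₀ v)) := by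
  rw [Dmap, Frob_apply, linz_frob]; rfl

lemma qmap_frob {n : ℕ} (s : M →ₗ[R] (Fin n → R))
    (π₀ : (Fin n → R) →ₗ[R] M) (v : Fin n → R) :
    qmap φ s π₀ (Frob φ n v) = Frob φ n (s (π₀ v)) := by
  rw [qmap, Frob_apply, linz_frob]; rfl

/-- the additive map `φ*M → R^n`, `σ ⊗ m ↦ σ • Frob (s m)` -/
noncomputable def Amap {n : ℕ} (s : M →ₗ[R] (Fin n → R)) :
    Tw φ ⊗[R] M →+ (Fin n → R) :=
  (phiLin φ (Frob φ n)).comp (LinearMap.lTensor (Tw φ) s).toAddMonoidHom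

lemma Amap_tmul {n : ℕ} (s : M →ₗ[R] (Fin n → R)) (σ : Tw φ) (m : M) :
    Amap φ s (σ ⊗ₜ[R] m) = σ.val • Frob φ n (s m) := by
  simp only [Amap, AddMonoidHom.comp_apply, LinearMap.toAddMonoidHom_coe,
    LinearMap.lTensor_tmul]
  rw [phiLin_tmul]

/-- multiplication by `r` on the twist, which is `R`-linear -/
def mulL (r : R) : Tw φ →ₗ[R] Tw φ where
  toFun t := Tw.of φ (r * t.val)
  map_add' a b := congrArg (Tw.of φ) (mul_add r a.val b.val)
  map_smul' a t := congrArg (Tw.of φ) (mul_left_comm r (φ a) t.val)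

noncomputable def rT (r : R) : Tw φ ⊗[R] M →ₗ[R] Tw φ ⊗[R] M :=
  LinearMap.rTensor M (mulL φ r)

lemma phiLin_rT (FM : M →ₛₗ[φ] M) (r : R) (t : Tw φ ⊗[R] M) :
    phiLin φ FM (rT φ r t) = r • phiLin φ FM t := by
  induction t using TensorProduct.induction_on with
  | zero => simp
  | add x y hx hy => simp [map_add, hx, hy]
  | tmul σ m =>
    rw [rT, LinearMap.rTensor_tmul, phiLin_tmul, phiLin_tmul]
    show (r * σ.val) • FM m = r • σ.val • FM m
    rw [mul_smul]

lemma Amap_rT {n : ℕ} (s : M →ₗ[R] (Fin n → R)) (r : R) (t : Tw φ ⊗[R] M) :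
    Amap φ s (rT φ r t) = r • Amap φ s t := by
  induction t using TensorProduct.induction_on with
  | zero => simp
  | add x y hx hy => simp [map_add, hx, hy]
  | tmul σ m =>
    rw [rT, LinearMap.rTensor_tmul, Amap_tmul, Amap_tmul]
    show (r * σ.val) • Frob φ n (s m) = r • σ.val • Frob φ n (s m)
    rw [mul_smul]

/-- the inverse of the linearization, as an additive equivalence -/
noncomputable def ce (FM : M →ₛₗ[φ] M) (hM : Function.Bijective (phiLin φ FM)) :
    (Tw φ ⊗[R] M) ≃+ M :=
  AddEquiv.ofBijective (phiLin φ FM) hM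

lemma ce_apply (FM : M →ₛₗ[φ] M) (hM : Function.Bijective (phiLin φ FM))
    (t : Tw φ ⊗[R] M) : ce φ FM hM t = phiLin φ FM t := rfl

/-- the canonical linear section `M → R^n` of `D` -/
noncomputable def kmap (FM : M →ₛₗ[φ] M) (hM : Function.Bijective (phiLin φ FM))
    {n : ℕ} (s : M →ₗ[R] (Fin n → R)) : M →ₗ[R] (Fin n → R) where
  toFun m := Amap φ s ((ce φ FM hM).symm m)
  map_add' a b := by rw [map_add, map_add]
  map_smul' r m := by
    have h1 : (ce φ FM hM).symm (r • m) = rT φ r ((ce φ FM hM).symm m) := by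
      apply (ce φ FM hM).injective
      rw [AddEquiv.apply_symm_apply, ce_apply, phiLin_rT]
      have : phiLin φ FM ((ce φ FM hM).symm m) = m :=
        (ce φ FM hM).apply_symm_apply m
      rw [this]
    rw [h1, Amap_rT, RingHom.id_apply]

lemma kmap_apply (FM : M →ₛₗ[φ] M) (hM : Function.Bijective (phiLin φ FM))
    {n : ℕ} (s : M →ₗ[R] (Fin n → R)) (m : M) :
    kmap φ FM hM s m = Amap φ s ((ce φ FM hM).symm m) := rfl

end Core

section Identities

variable (φ : R →+* R) {M : Type*} [AddCommGroup M] [Module R M]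
variable (FM : M →ₛₗ[φ] M) (hM : Function.Bijective (phiLin φ FM))
variable {n : ℕ} (s : M →ₗ[R] (Fin n → R)) (π₀ : (Fin n → R) →ₗ[R] M)

lemma h_kD (hsplit : ∀ m, π₀ (s m) = m) :
    ∀ m, Dmap φ FM s π₀ (kmap φ FM hM s m) = s m := by
  have key : ∀ t, Dmap φ FM s π₀ (Amap φ s t) = s (phiLin φ FM t) := by
    intro t
    induction t using TensorProduct.induction_on with
    | zero => simp
    | add x y hx hy => simp [map_add, hx, hy]
    | tmul σ m =>
      rw [Amap_tmul, phiLin_tmul, map_smul, Dmap_frob, hsplit, map_smul]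
  intro m
  rw [kmap_apply, key]
  exact congrArg s ((ce φ FM hM).apply_symm_apply m)

lemma h_qk (hsplit : ∀ m, π₀ (s m) = m) :
    ∀ m, qmap φ s π₀ (kmap φ FM hM s m) = kmap φ FM hM s m := by
  have key : ∀ t, qmap φ s π₀ (Amap φ s t) = Amap φ s t := by
    intro t
    induction t using TensorProduct.induction_on with
    | zero => simp
    | add x y hx hy => simp [map_add, hx, hy]
    | tmul σ m =>
      rw [Amap_tmul, map_smul, qmap_frob, hsplit]
  intro m
  rw [kmap_apply, key]

lemma h_kFM : ∀ m, kmap φ FM hM s (FM m) = Frob φ n (s m) := by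
  intro m
  have h1 : (ce φ FM hM).symm (FM m) = (Tw.of φ 1) ⊗ₜ[R] m := by
    apply (ce φ FM hM).injective
    rw [AddEquiv.apply_symm_apply, ce_apply, phiLin_tmul]
    show FM m = (1 : R) • FM m
    rw [one_smul]
  rw [kmap_apply, h1, Amap_tmul]
  show (1 : R) • Frob φ n (s m) = Frob φ n (s m)
  rw [one_smul]

lemma I_qq (hsplit : ∀ m, π₀ (s m) = m) :
    ∀ v, qmap φ s π₀ (qmap φ s π₀ v) = qmap φ s π₀ v := by
  have hext : (qmap φ s π₀).comp (qmap φ s π₀) = qmap φ s π₀ := by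
    apply LinearMap.pi_ext
    intro j x
    have e1 : qmap φ s π₀ (Pi.single j x)
        = x • Frob φ n (s (π₀ (Pi.single j 1))) := linz_single φ (Tq φ s π₀) j x
    rw [LinearMap.comp_apply, e1, map_smul, qmap_frob, hsplit]
  intro v
  exact DFunLike.congr_fun hext v

lemma I_Dq (hsplit : ∀ m, π₀ (s m) = m) :
    ∀ v, Dmap φ FM s π₀ (qmap φ s π₀ v) = Dmap φ FM s π₀ v := by
  have hext : (Dmap φ FM s π₀).comp (qmap φ s π₀) = Dmap φ FM s π₀ := by
    apply LinearMap.pi_ext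
    intro j x
    have e1 : qmap φ s π₀ (Pi.single j x)
        = x • Frob φ n (s (π₀ (Pi.single j 1))) := linz_single φ (Tq φ s π₀) j x
    have eD : Dmap φ FM s π₀ (Pi.single j x)
        = x • s (FM (π₀ (Pi.single j 1))) := linz_single φ (TD φ FM s π₀) j x
    rw [LinearMap.comp_apply, e1, eD, map_smul, Dmap_frob, hsplit]
  intro v
  exact DFunLike.congr_fun hext v

lemma I_sD (hsplit : ∀ m, π₀ (s m) = m) :
    ∀ v, s (π₀ (Dmap φ FM s π₀ v)) = Dmap φ FM s π₀ v := by
  have hext : (s.comp π₀).comp (Dmap φ FM s π₀) = Dmap φ FM s π₀ := by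
    apply LinearMap.pi_ext
    intro j x
    have eD : Dmap φ FM s π₀ (Pi.single j x)
        = x • s (FM (π₀ (Pi.single j 1))) := linz_single φ (TD φ FM s π₀) j x
    simp only [LinearMap.comp_apply]
    rw [eD, map_smul, map_smul, hsplit]
  intro v
  exact DFunLike.congr_fun hext v

lemma I_kD (hsplit : ∀ m, π₀ (s m) = m) :
    ∀ v, kmap φ FM hM s (π₀ (Dmap φ FM s π₀ v)) = qmap φ s π₀ v := by
  have hext : ((kmap φ FM hM s).comp π₀).comp (Dmap φ FM s π₀) = qmap φ s π₀ := by
    apply LinearMap.pi_ext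
    intro j x
    have e1 : qmap φ s π₀ (Pi.single j x)
        = x • Frob φ n (s (π₀ (Pi.single j 1))) := linz_single φ (Tq φ s π₀) j x
    have eD : Dmap φ FM s π₀ (Pi.single j x)
        = x • s (FM (π₀ (Pi.single j 1))) := linz_single φ (TD φ FM s π₀) j x
    simp only [LinearMap.comp_apply]
    rw [eD, e1, map_smul, map_smul, hsplit, h_kFM]
  intro v
  exact DFunLike.congr_fun hext v

end Identities

section Main

variable (φ : R →+* R) {M : Type*} [AddCommGroup M] [Module R M]
variable (FM : M →ₛₗ[φ] M) (hM : Function.Bijective (phiLin φ FM))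
variable {n : ℕ} (s : M →ₗ[R] (Fin n → R)) (π₀ : (Fin n → R) →ₗ[R] M)

/-- The linear automorphism underlying the étale structure on `G ⊕ (P ⊕ M)`. -/
noncomputable def Cmap : ((Fin n → R) × (Fin n → R)) →ₗ[R] ((Fin n → R) × (Fin n → R)) where
  toFun p := (p.2 - qmap φ s π₀ p.2 + kmap φ FM hM s (π₀ p.1),
    p.1 - s (π₀ p.1) + Dmap φ FM s π₀ p.2)
  map_add' p q := by
    simp only [Prod.fst_add, Prod.snd_add, map_add, Prod.mk_add_mk, Prod.ext_iff]
    constructor <;> abel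
  map_smul' r p := by
    simp only [Prod.smul_fst, Prod.smul_snd, map_smul, RingHom.id_apply, Prod.smul_mk,
      Prod.ext_iff, smul_add, smul_sub]
    try exact ⟨rfl, rfl⟩

lemma Cmap_apply (p : (Fin n → R) × (Fin n → R)) :
    Cmap φ FM hM s π₀ p = (p.2 - qmap φ s π₀ p.2 + kmap φ FM hM s (π₀ p.1),
      p.1 - s (π₀ p.1) + Dmap φ FM s π₀ p.2) := rfl

lemma Cmap_bijective (hsplit : ∀ m, π₀ (s m) = m) :
    Function.Bijective (Cmap φ FM hM s π₀) := by
  rw [Function.bijective_iff_has_inverse]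
  refine ⟨fun p => (p.2 - s (π₀ p.2) + Dmap φ FM s π₀ p.1,
    p.1 - qmap φ s π₀ p.1 + kmap φ FM hM s (π₀ p.2)), fun p => ?_, fun p => ?_⟩
  · simp only [Cmap_apply, Prod.ext_iff, map_add, map_sub, hsplit,
      I_sD φ FM s π₀ hsplit, I_Dq φ FM s π₀ hsplit, I_qq φ s π₀ hsplit,
      I_kD φ FM hM s π₀ hsplit, h_kD φ FM hM s π₀ hsplit, h_qk φ FM hM s π₀ hsplit]
    try (constructor <;> abel)
  · simp only [Cmap_apply, Prod.ext_iff, map_add, map_sub, hsplit,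
      I_sD φ FM s π₀ hsplit, I_Dq φ FM s π₀ hsplit, I_qq φ s π₀ hsplit,
      I_kD φ FM hM s π₀ hsplit, h_kD φ FM hM s π₀ hsplit, h_qk φ FM hM s π₀ hsplit]
    try (constructor <;> abel)

/-- the étale structure on the free module `G ⊕ (P ⊕ M)` -/
noncomputable def FV : ((Fin n → R) × (Fin n → R)) →ₛₗ[φ] ((Fin n → R) × (Fin n → R)) :=
  (Cmap φ FM hM s π₀).comp (Frob2 φ n)

lemma FV_bijective (hsplit : ∀ m, π₀ (s m) = m) :
    Function.Bijective (phiLin φ (FV φ FM hM s π₀)) := by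
  have h : ∀ t, phiLin φ (FV φ FM hM s π₀) t
      = Cmap φ FM hM s π₀ (phiLin φ (Frob2 φ n) t) := phiLin_comp φ _
  have : ⇑(phiLin φ (FV φ FM hM s π₀))
      = ⇑(Cmap φ FM hM s π₀) ∘ ⇑(phiLin φ (Frob2 φ n)) := funext h
  rw [this]
  exact (Cmap_bijective φ FM hM s π₀ hsplit).comp (Frob2_bijective φ n)

lemma FV_apply (p : (Fin n → R) × (Fin n → R)) :
    FV φ FM hM s π₀ p
      = (Frob φ n p.2 - qmap φ s π₀ (Frob φ n p.2) + kmap φ FM hM s (π₀ (Frob φ n p.1)),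
        Frob φ n p.1 - s (π₀ (Frob φ n p.1)) + Dmap φ FM s π₀ (Frob φ n p.2)) := rfl

theorem core (hM : Function.Bijective (phiLin φ FM)) (hsplit : ∀ m, π₀ (s m) = m) :
    ∃ FF : ((Fin n → R) × (Fin n → R)) →ₛₗ[φ] ((Fin n → R) × (Fin n → R)),
      Function.Bijective (phiLin φ FF) ∧
      ∃ (i : M →ₗ[R] ((Fin n → R) × (Fin n → R)))
        (π : ((Fin n → R) × (Fin n → R)) →ₗ[R] M),
        (∀ m, π (i m) = m) ∧ (∀ m, FF (i m) = i (FM m)) ∧ (∀ v, π (FF v) = FM (π v)) := by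
  refine ⟨FV φ FM hM s π₀, FV_bijective φ FM hM s π₀ hsplit,
    LinearMap.prod 0 s, π₀.comp (LinearMap.snd R _ _), ?_, ?_, ?_⟩
  · intro m
    simp [hsplit]
  · intro m
    rw [FV_apply]
    have e0 : Frob φ n ((LinearMap.prod (0 : M →ₗ[R] (Fin n → R)) s m).1) = 0 := by
      simp
    have e1 : (LinearMap.prod (0 : M →ₗ[R] (Fin n → R)) s m).2 = s m := rfl
    rw [e0, e1, map_zero, map_zero, qmap_frob, hsplit, map_zero, Dmap_frob, hsplit]
    ext i
    · show (Frob φ n (s m) - Frob φ n (s m) + 0) i = (0 : Fin n → R) i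
      simp
    · show ((0 : Fin n → R) - 0 + s (FM m)) i = s (FM m) i
      simp
  · intro v
    rw [FV_apply]
    show π₀ (Frob φ n v.1 - s (π₀ (Frob φ n v.1)) + Dmap φ FM s π₀ (Frob φ n v.2))
      = FM (π₀ v.2)
    rw [map_add, map_sub, hsplit, Dmap_frob, hsplit, sub_self, zero_add]

end Main

section Transport

variable (φ : R →+* R) {M : Type*} [AddCommGroup M] [Module R M]

theorem transport {V W : Type*} [AddCommGroup V] [Module R V] [AddCommGroup W] [Module R W]
    (FM : M →ₛₗ[φ] M) (E : V ≃ₗ[R] W)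
    (h : ∃ FF : V →ₛₗ[φ] V, Function.Bijective (phiLin φ FF) ∧
      ∃ (i : M →ₗ[R] V) (π : V →ₗ[R] M),
        (∀ m, π (i m) = m) ∧ (∀ m, FF (i m) = i (FM m)) ∧ (∀ v, π (FF v) = FM (π v))) :
    ∃ FF : W →ₛₗ[φ] W, Function.Bijective (phiLin φ FF) ∧
      ∃ (i : M →ₗ[R] W) (π : W →ₗ[R] M),
        (∀ m, π (i m) = m) ∧ (∀ m, FF (i m) = i (FM m)) ∧ (∀ v, π (FF v) = FM (π v)) := by
  obtain ⟨F0, hbij, i0, π0, hπi, hFi, hπF⟩ := h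
  refine ⟨E.toLinearMap.comp (F0.comp E.symm.toLinearMap), ?_,
    E.toLinearMap.comp i0, π0.comp E.symm.toLinearMap, ?_, ?_, ?_⟩
  · have key : ∀ t, phiLin φ (E.toLinearMap.comp (F0.comp E.symm.toLinearMap)) t
        = E (phiLin φ F0
            ((TensorProduct.congr (LinearEquiv.refl R (Tw φ)) E.symm) t)) := by
      intro t
      induction t using TensorProduct.induction_on with
      | zero => simp
      | add x y hx hy => simp [map_add, hx, hy]
      | tmul σ w =>
        rw [TensorProduct.congr_tmul, phiLin_tmul, phiLin_tmul]
        simp only [LinearMap.comp_apply, LinearEquiv.coe_coe, LinearEquiv.refl_apply]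
        rw [map_smul]
    have hfun : ⇑(phiLin φ (E.toLinearMap.comp (F0.comp E.symm.toLinearMap)))
        = ⇑E ∘ ⇑(phiLin φ F0)
          ∘ ⇑(TensorProduct.congr (LinearEquiv.refl R (Tw φ)) E.symm) := funext key
    rw [hfun]
    exact E.bijective.comp (hbij.comp
      (TensorProduct.congr (LinearEquiv.refl R (Tw φ)) E.symm).bijective)
  · intro m
    simp only [LinearMap.comp_apply, LinearEquiv.coe_coe, LinearEquiv.symm_apply_apply]
    exact hπi m
  · intro m
    simp only [LinearMap.comp_apply, LinearEquiv.coe_coe, LinearEquiv.symm_apply_apply]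
    exact congrArg E (hFi m)
  · intro w
    simp only [LinearMap.comp_apply, LinearEquiv.coe_coe, LinearEquiv.symm_apply_apply]
    exact hπF (E.symm w)

end Transport

/-- Every finitely generated projective étale `φ`-module `M` over a topological
commutative ring `R` (with continuous endomorphism `φ`) is a direct summand, as an
étale `φ`-module, of a finite free étale `φ`-module. -/
theorem stmt_14 {R : Type*} [CommRing R] [TopologicalSpace R] [IsTopologicalRing R]
    (φ : R →+* R) (hφ : Continuous φ)
    {M : Type*} [AddCommGroup M] [Module R M] [Module.Finite R M]
    [Module.Projective R M]
    (FM : M →ₛₗ[φ] M) (hM : Function.Bijective (phiLin φ FM)) :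
    ∃ (n : ℕ) (FF : (Fin n → R) →ₛₗ[φ] (Fin n → R)),
      Function.Bijective (phiLin φ FF) ∧
      ∃ (i : M →ₗ[R] (Fin n → R)) (π : (Fin n → R) →ₗ[R] M),
        (∀ m, π (i m) = m) ∧ (∀ m, FF (i m) = i (FM m)) ∧ (∀ v, π (FF v) = FM (π v)) := by
  obtain ⟨n, π₀, hsurj⟩ := Module.Finite.exists_fin' R M
  obtain ⟨s, hs⟩ := Module.projective_lifting_property π₀ LinearMap.id hsurj
  have hsplit : ∀ m, π₀ (s m) = m := fun m => DFunLike.congr_fun hs m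
  refine ⟨n + n, ?_⟩
  have E : ((Fin n → R) × (Fin n → R)) ≃ₗ[R] (Fin (n + n) → R) :=
    (LinearEquiv.sumArrowLequivProdArrow (Fin n) (Fin n) R R).symm.trans
      (LinearEquiv.funCongrLeft R R finSumFinEquiv.symm)
  exact transport φ FM E (core φ FM s π₀ hM hsplit)
end

section
/- Let R be a ring complete for a valuation val with val(xy) ≥ val(x)+val(y), equipped with a continuous action of a profinite group H, and suppose there is a constant c₁ > 0 such that for each pair of open subgroups H₁ ⊆ H₂ there exists α ∈ R^{H₁} with val(α) > −c₁ and Σ_{τ ∈ H₂/H₁} τ(α) = 1 (Tate's normalized trace axiom TS1). Let a > c₁ and let τ ↦ U_τ be a continuous 1-cocycle of H valued in GL_d(R) with val(U_τ − 1) ≥ a for all τ. Then there exists M ∈ GL_d(R) with val(M − 1) ≥ a − c₁ such that the cocycle τ ↦ M^{-1} U_τ τ(M) satisfies val(M^{-1} U_τ τ(M) − 1) ≥ a + 1 for all τ ∈ H. -/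
open Filter Finset

section aux

variable {R : Type*} [CommRing R] (val : R → EReal)

lemma aux_val_sum {ι : Type*} (hzero : ∀ x : R, val x = ⊤ ↔ x = 0)
    (hadd : ∀ x y, min (val x) (val y) ≤ val (x + y))
    (s : Finset ι) (f : ι → R) (r : EReal) (h : ∀ i ∈ s, r ≤ val (f i)) :
    r ≤ val (∑ i ∈ s, f i) := by
  classical
  induction s using Finset.induction_on with
  | empty => simp [(hzero (0:R)).2 rfl]
  | insert x s hx ih =>
    rw [Finset.sum_insert hx]
    refine le_trans (le_min (h _ (Finset.mem_insert_self _ _)) ?_) (hadd _ _)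
    exact ih fun i hi => h i (Finset.mem_insert_of_mem hi)

lemma aux_val_mul (hmul : ∀ x y : R, val x + val y ≤ val (x * y)) {x y : R} {r s : EReal}
    (hx : r ≤ val x) (hy : s ≤ val y) : r + s ≤ val (x * y) :=
  le_trans (add_le_add hx hy) (hmul x y)

variable {n : Type*} [Fintype n] [DecidableEq n]

set_option linter.unusedSectionVars false

lemma aux_mval_mul (hzero : ∀ x : R, val x = ⊤ ↔ x = 0)
    (hmul : ∀ x y : R, val x + val y ≤ val (x * y))
    (hadd : ∀ x y, min (val x) (val y) ≤ val (x + y))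
    {A B : Matrix n n R} {r s : EReal}
    (hA : ∀ i j, r ≤ val (A i j)) (hB : ∀ i j, s ≤ val (B i j)) :
    ∀ i j, r + s ≤ val ((A * B) i j) := by
  intro i j
  rw [Matrix.mul_apply]
  exact aux_val_sum val hzero hadd _ _ _ fun k _ => aux_val_mul val hmul (hA i k) (hB k j)

lemma aux_mval_one (hzero : ∀ x : R, val x = ⊤ ↔ x = 0) {r : EReal} (h1 : r ≤ val (1 : R)) :
    ∀ i j, r ≤ val ((1 : Matrix n n R) i j) := by
  intro i j
  by_cases h : i = j
  · simpa [h, Matrix.one_apply] using h1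
  · simp [Matrix.one_apply, h, (hzero (0:R)).2 rfl]

end aux

section auxtop

variable {R : Type*} [CommRing R] [UniformSpace R] [IsUniformAddGroup R] (val : R → EReal)
  (hbasis : (nhds (0 : R)).HasBasis (fun _ : ℝ => True) fun c => {x | (c : EReal) < val x})

include hbasis

lemma aux_val_hasSum (hzero : ∀ x : R, val x = ⊤ ↔ x = 0)
    (hadd : ∀ x y, min (val x) (val y) ≤ val (x + y))
    {ι : Type*} {f : ι → R} {s : R} (hs : HasSum f s) {r : EReal}
    (h : ∀ i, r ≤ val (f i)) : r ≤ val s := by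
  by_contra hlt
  push_neg at hlt
  obtain ⟨c, hc1, hc2⟩ := EReal.exists_between_coe_real hlt
  have hV : {y : R | (c : EReal) < val (s - y)} ∈ nhds s := by
    have hcont : ContinuousAt (fun y : R => s - y) s := (continuous_const.sub continuous_id).continuousAt
    have h0 : {x : R | (c : EReal) < val x} ∈ nhds (s - s) := by
      simpa using hbasis.mem_of_mem (i := c) trivial
    exact hcont.preimage_mem_nhds h0
  obtain ⟨A, hA⟩ := (hs.eventually_mem hV).exists
  have h1 : r ≤ val (∑ i ∈ A, f i) := aux_val_sum val hzero hadd _ _ _ fun i _ => h i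
  have h2 : min (val (∑ i ∈ A, f i)) (val (s - ∑ i ∈ A, f i)) ≤ val s := by
    simpa using hadd (∑ i ∈ A, f i) (s - ∑ i ∈ A, f i)
  have h3 : val s < min (val (∑ i ∈ A, f i)) (val (s - ∑ i ∈ A, f i)) :=
    lt_min (lt_of_lt_of_le hc1 (le_trans (le_of_lt hc2) h1)) (lt_trans hc1 hA)
  exact absurd (lt_of_lt_of_le h3 h2) (lt_irrefl _)

lemma aux_cont_mulLeft (hmul : ∀ x y : R, val x + val y ≤ val (x * y))
    {cst : R} {r : ℝ} (hc : (r : EReal) ≤ val cst) :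
    Continuous fun x : R => cst * x := by
  have h0 : ContinuousAt (fun x : R => cst * x) 0 := by
    have : Tendsto (fun x : R => cst * x) (nhds 0) (nhds 0) := by
      rw [hbasis.tendsto_iff hbasis]
      intro e _
      refine ⟨e - r, trivial, fun x hx => ?_⟩
      have h1 : ((e - r : ℝ) : EReal) < val x := hx
      have h2 : (r : EReal) + (e - r : ℝ) < r + val x := EReal.add_lt_add_left_coe h1 r
      have h3 : (r : EReal) + val x ≤ val (cst * x) :=
        le_trans (add_le_add hc le_rfl) (hmul cst x)
      have h4 : ((e : ℝ) : EReal) = (r : EReal) + ((e - r : ℝ) : EReal) := by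
        norm_cast; ring
      exact lt_of_lt_of_le (by rw [h4]; exact h2) h3
    simpa [ContinuousAt] using this
  exact continuous_of_continuousAt_zero (AddMonoidHom.mulLeft cst) h0

lemma aux_t2 (hzero : ∀ x : R, val x = ⊤ ↔ x = 0) : T2Space R := by
  rw [IsTopologicalAddGroup.t2Space_iff_zero_closed]
  rw [← isOpen_compl_iff]
  rw [isOpen_iff_mem_nhds]
  intro x hx
  have hxne : x ≠ 0 := by simpa using hx
  have hvx : val x < ⊤ := lt_of_le_of_ne le_top fun h => hxne ((hzero x).1 h)
  obtain ⟨c, hc1, _⟩ := EReal.exists_between_coe_real hvx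
  have hcont : ContinuousAt (fun y : R => x - y) x := (continuous_const.sub continuous_id).continuousAt
  have h0 : {z : R | (c : EReal) < val z} ∈ nhds (x - x) := by
    simpa using hbasis.mem_of_mem (i := c) trivial
  refine Filter.mem_of_superset (hcont.preimage_mem_nhds h0) ?_
  intro y hy
  simp only [Set.mem_preimage, Set.mem_setOf_eq] at hy
  simp only [Set.mem_compl_iff, Set.mem_singleton_iff]
  rintro rfl
  simp only [sub_zero] at hy
  exact absurd hy (not_lt.2 (le_of_lt hc1))

end auxtop

set_option maxHeartbeats 1600000

/-- Tate–Sen descent along the axiom (TS1).  Let `R` be a ring, complete for a valuation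
`val` (submultiplicative, nonarchimedean), with a continuous unitary action of a
profinite group `H` by ring automorphisms, satisfying the normalized-trace axiom (TS1)
with constant `c₁ > 0`: for every pair of open subgroups `H₁ ≤ H₂` of `H` there is
`α ∈ R^{H₁}` with `val α > −c₁` whose `H₂/H₁`-trace equals `1`.  If `a > c₁` and
`τ ↦ U_τ` is a continuous `1`-cocycle of `H` valued in `GL_d(R)` with
`val(U_τ − 1) ≥ a` for all `τ`, then there is `M ∈ GL_d(R)` with `val(M − 1) ≥ a − c₁`
such that the cocycle `τ ↦ M⁻¹ U_τ τ(M)` satisfies `val(M⁻¹ U_τ τ(M) − 1) ≥ a + 1`. -/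
theorem stmt_18 {H : Type*} [Group H] [TopologicalSpace H] [IsTopologicalGroup H]
    [CompactSpace H] [TotallyDisconnectedSpace H]
    {R : Type*} [CommRing R] [UniformSpace R] [IsUniformAddGroup R] [CompleteSpace R]
    (ρ : H →* RingAut R)
    (hρcont : Continuous fun q : H × R => ρ q.1 q.2)
    (val : R → EReal)
    (hzero : ∀ x, val x = ⊤ ↔ x = 0)
    (hmul : ∀ x y, val x + val y ≤ val (x * y))
    (hadd : ∀ x y, min (val x) (val y) ≤ val (x + y))
    (hunit : ∀ τ x, val (ρ τ x) = val x)
    (hbasis : (nhds (0 : R)).HasBasis (fun _ : ℝ => True) fun c => {x | (c : EReal) < val x})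
    (c₁ : ℝ) (hc₁ : 0 < c₁)
    (hTS1 : ∀ H₁ H₂ : Subgroup H, IsOpen (H₁ : Set H) → IsOpen (H₂ : Set H) → H₁ ≤ H₂ →
      ∃ α : R, (∀ τ ∈ H₁, ρ τ α = α) ∧ (((-c₁ : ℝ) : EReal) < val α) ∧
        ∃ T : Finset H, (∀ τ ∈ T, τ ∈ H₂) ∧
          (∀ σ ∈ H₂, ∃! τ, τ ∈ T ∧ σ⁻¹ * τ ∈ H₁) ∧
          (∑ τ ∈ T, ρ τ α) = 1)
    {d : ℕ} (U : H → Matrix (Fin d) (Fin d) R)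
    (hUcont : Continuous U)
    (hUcoc : ∀ σ τ, U (σ * τ) = U σ * (U τ).map (ρ σ))
    (hUunit : ∀ τ, IsUnit (U τ))
    (a : ℝ) (ha : c₁ < a)
    (hUval : ∀ τ, ((a : ℝ) : EReal) ≤ ⨅ i, ⨅ j, val ((U τ - 1) i j)) :
    ∃ M M' : Matrix (Fin d) (Fin d) R, M * M' = 1 ∧ M' * M = 1 ∧
      (((a - c₁ : ℝ)) : EReal) ≤ (⨅ i, ⨅ j, val ((M - 1) i j)) ∧
      ∀ τ : H, (((a + 1 : ℝ)) : EReal) ≤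
        ⨅ i, ⨅ j, val ((M' * U τ * (M.map (ρ τ)) - 1) i j) := by
  classical
  haveI : T2Space R := aux_t2 val hbasis hzero
  have hval0 : val (0 : R) = ⊤ := (hzero 0).2 rfl
  -- val 1 ≥ -c₁
  have hv1 : ((-c₁ : ℝ) : EReal) < val (1 : R) := by
    obtain ⟨α₀, _, hα₀val, T₀, _, _, hT₀sum⟩ :=
      hTS1 ⊤ ⊤ (by simp) (by simp) le_rfl
    refine lt_of_lt_of_le hα₀val ?_
    rw [← hT₀sum]
    exact aux_val_sum val hzero hadd _ _ _ fun τ _ => le_of_eq (hunit τ α₀).symm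
  have hv1' : ((-c₁ : ℝ) : EReal) ≤ val (1 : R) := le_of_lt hv1
  -- U 1 = 1
  have hU1 : U 1 = 1 := by
    have h := (hUcoc 1 1).symm
    rw [mul_one] at h
    have hmap : (U 1).map (ρ 1) = U 1 := by
      have : ρ (1 : H) = 1 := map_one ρ
      rw [this]
      ext i j
      simp only [Matrix.map_apply]
      rfl
    rw [hmap] at h
    -- h : U 1 * U 1 = U 1
    have := (hUunit 1).mul_left_cancel (by rw [h, mul_one] : U 1 * U 1 = U 1 * 1)
    exact this
  -- entry bounds for U τ - 1 and U τ
  have hUent1 : ∀ τ i j, ((a : ℝ) : EReal) ≤ val ((U τ - 1) i j) := by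
    intro τ i j
    exact le_trans (hUval τ) (le_trans (iInf_le _ i) (iInf_le _ j))
  have hUent : ∀ τ i j, ((-c₁ : ℝ) : EReal) ≤ val (U τ i j) := by
    intro τ i j
    have h : U τ i j = (1 : Matrix (Fin d) (Fin d) R) i j + (U τ - 1) i j := by simp
    rw [h]
    refine le_trans ?_ (hadd _ _)
    refine le_min (aux_mval_one val hzero hv1' i j) ?_
    exact le_trans (by exact_mod_cast EReal.coe_le_coe_iff.2 (by linarith)) (hUent1 τ i j)
  -- choose threshold b and open subgroup V of H
  set b : ℝ := a + 1 + 3 * c₁ with hbdef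
  have hS₀ : {h : H | ∀ i j, (b : EReal) < val ((U h - 1) i j)} ∈ nhds (1 : H) := by
    have hij : ∀ i j : Fin d, {h : H | (b : EReal) < val ((U h - 1) i j)} ∈ nhds (1 : H) := by
      intro i j
      have hcont : Continuous fun h : H => (U h - 1) i j :=
        ((hUcont.sub continuous_const).matrix_elem i j)
      have h0 : {x : R | (b : EReal) < val x} ∈ nhds ((U 1 - 1) i j) := by
        rw [hU1]
        simpa using hbasis.mem_of_mem (i := b) trivial
      exact hcont.continuousAt.preimage_mem_nhds h0
    have heq : {h : H | ∀ i j, (b : EReal) < val ((U h - 1) i j)} =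
        ⋂ i, ⋂ j, {h : H | (b : EReal) < val ((U h - 1) i j)} := by
      ext h; simp [Set.mem_iInter]
    rw [heq]
    exact Filter.iInter_mem.2 fun i => Filter.iInter_mem.2 fun j => hij i j
  haveI : T2Space H := IsTopologicalGroup.t2Space_iff_one_closed.2 isClosed_singleton
  obtain ⟨O, hOsub, hOopen, hO1⟩ := mem_nhds_iff.1 hS₀
  obtain ⟨W, hWclopen, hW1, hWsub⟩ := compact_exists_isClopen_in_isOpen hOopen hO1
  obtain ⟨V, hV⟩ := IsTopologicalGroup.exist_openSubgroup_sub_clopen_nhds_of_one hWclopen hW1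
  have hVval : ∀ h, h ∈ V.toSubgroup → ∀ i j, (b : EReal) ≤ val ((U h - 1) i j) :=
    fun h hh i j => le_of_lt (hOsub (hWsub (hV hh)) i j)
  -- apply TS1
  obtain ⟨α, hαinv, hαval, T, hTmem, hTrans, hTsum⟩ :=
    hTS1 V.toSubgroup ⊤ V.isOpen (by simp) le_top
  have hαle : ((-c₁ : ℝ) : EReal) ≤ val α := le_of_lt hαval
  have hραle : ∀ σ : H, ((-c₁ : ℝ) : EReal) ≤ val (ρ σ α) := fun σ => by
    rw [hunit]; exact hαle
  -- the matrix M
  set M : Matrix (Fin d) (Fin d) R := ∑ σ ∈ T, ρ σ α • U σ with hMdef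
  have coe2 : ∀ x y : ℝ, ((x + y : ℝ) : EReal) = (x : EReal) + (y : EReal) := fun x y => by
    norm_cast
  have hMent : ∀ i j, ((-(2*c₁) : ℝ) : EReal) ≤ val (M i j) := by
    intro i j
    rw [hMdef, Matrix.sum_apply]
    refine aux_val_sum val hzero hadd _ _ _ fun σ _ => ?_
    rw [Matrix.smul_apply, smul_eq_mul]
    have := aux_val_mul val hmul (hραle σ) (hUent σ i j)
    refine le_trans (le_of_eq ?_) this
    rw [← coe2]; congr 1; ring
  have hsum1 : (1 : Matrix (Fin d) (Fin d) R) = ∑ σ ∈ T, ρ σ α • (1 : Matrix (Fin d) (Fin d) R) := by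
    rw [← Finset.sum_smul, hTsum, one_smul]
  have hM1 : M - 1 = ∑ σ ∈ T, ρ σ α • (U σ - 1) := by
    calc M - 1 = ∑ σ ∈ T, (ρ σ α • U σ - ρ σ α • (1 : Matrix (Fin d) (Fin d) R)) := by
          rw [Finset.sum_sub_distrib, ← hMdef, ← hsum1]
      _ = _ := by simp [smul_sub]
  have hM1ent : ∀ i j, ((a - c₁ : ℝ) : EReal) ≤ val ((M - 1) i j) := by
    intro i j
    rw [hM1, Matrix.sum_apply]
    refine aux_val_sum val hzero hadd _ _ _ fun σ _ => ?_
    rw [Matrix.smul_apply, smul_eq_mul]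
    have := aux_val_mul val hmul (hραle σ) (hUent1 σ i j)
    refine le_trans (le_of_eq ?_) this
    rw [← coe2]; congr 1; ring
  -- the matrix 1 - M
  have hUinv : ∀ σ : H, (1 : Matrix (Fin d) (Fin d) R) - U σ
      = U σ * ((U σ⁻¹ - 1).map (ρ σ)) := by
    intro σ
    have h := hUcoc σ σ⁻¹
    rw [mul_inv_cancel, hU1] at h
    have hmapsub : (U σ⁻¹ - 1).map (ρ σ) = (U σ⁻¹).map (ρ σ) - 1 := by
      ext i j
      by_cases hij : i = j <;>
        simp [Matrix.map_apply, Matrix.sub_apply, Matrix.one_apply, hij, map_sub, map_one, map_zero]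
    rw [hmapsub, mul_sub, mul_one, ← h]
  have hUinvent : ∀ σ : H, ∀ i j, ((-c₁ + a : ℝ) : EReal) ≤
      val (((1 : Matrix (Fin d) (Fin d) R) - U σ) i j) := by
    intro σ i j
    rw [hUinv σ, coe2]
    refine aux_mval_mul val hzero hmul hadd (hUent σ) ?_ i j
    intro i' j'
    rw [Matrix.map_apply, hunit]
    exact hUent1 σ⁻¹ i' j'
  have h1M : 1 - M = ∑ σ ∈ T, ρ σ α • ((1 : Matrix (Fin d) (Fin d) R) - U σ) := by
    calc (1 : Matrix (Fin d) (Fin d) R) - M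
        = ∑ σ ∈ T, (ρ σ α • (1 : Matrix (Fin d) (Fin d) R) - ρ σ α • U σ) := by
          rw [Finset.sum_sub_distrib, ← hMdef, ← hsum1]
      _ = _ := by simp [smul_sub]
  have h1Ment : ∀ i j, ((a - 2*c₁ : ℝ) : EReal) ≤ val ((1 - M) i j) := by
    intro i j
    rw [h1M, Matrix.sum_apply]
    refine aux_val_sum val hzero hadd _ _ _ fun σ _ => ?_
    rw [Matrix.smul_apply, smul_eq_mul]
    have := aux_val_mul val hmul (hραle σ) (hUinvent σ i j)
    refine le_trans (le_of_eq ?_) this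
    rw [← coe2]; congr 1; ring
  -- powers of Q = 1 - M
  have hQpow : ∀ k : ℕ, ∀ i j, ((-c₁ + k * (a - c₁) : ℝ) : EReal) ≤ val (((1 - M)^k) i j) := by
    intro k
    induction k using Nat.twoStepInduction with
    | zero =>
      intro i j
      refine le_trans (le_of_eq ?_) (aux_mval_one val hzero hv1' i j)
      norm_num
    | one =>
      intro i j
      rw [pow_one]
      refine le_trans (le_of_eq ?_) (h1Ment i j)
      norm_cast; ring
    | more k ih _ =>
      intro i j
      have hpow : (1 - M)^(k+2) = (M - 1) * ((M - 1) * (1 - M)^k) := by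
        have : ((1 : Matrix (Fin d) (Fin d) R) - M)^(2+k) = (1 - M) * (1 - M) * (1 - M)^k := by
          rw [pow_add, pow_two]
        rw [show k + 2 = 2 + k from by ring, this]
        have h2 : ((1 : Matrix (Fin d) (Fin d) R) - M) * (1 - M) = (M - 1) * (M - 1) := by
          rw [← neg_sub M 1, neg_mul_neg]
        rw [h2, mul_assoc]
      rw [hpow]
      have hinner := aux_mval_mul val hzero hmul hadd hM1ent ih
      have houter := aux_mval_mul val hzero hmul hadd hM1ent hinner
      refine le_trans (le_of_eq ?_) (houter i j)
      rw [← coe2, ← coe2]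
      norm_cast
      push_cast
      ring
  -- summability of geometric series, entrywise
  have hQsummable : ∀ i j, Summable fun k : ℕ => ((1 - M)^k) i j := by
    intro i j
    rw [summable_iff_vanishing]
    intro e he
    obtain ⟨c, -, hce⟩ := hbasis.mem_iff.1 he
    obtain ⟨N, hN⟩ := exists_nat_gt ((c + c₁) / (a - c₁))
    refine ⟨Finset.range N, fun t ht => hce ?_⟩
    have hlt : ((c : ℝ) : EReal) < ((-c₁ + N * (a - c₁) : ℝ) : EReal) := by
      rw [EReal.coe_lt_coe_iff]
      have h1 : (c + c₁) / (a - c₁) * (a - c₁) < N * (a - c₁) :=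
        mul_lt_mul_of_pos_right hN (by linarith)
      rw [div_mul_cancel₀ _ (by linarith : a - c₁ ≠ 0)] at h1
      linarith
    refine lt_of_lt_of_le hlt ?_
    refine aux_val_sum val hzero hadd _ _ _ fun k hk => ?_
    have hkN : N ≤ k := by
      by_contra hlt'
      push_neg at hlt'
      exact (Finset.disjoint_left.1 ht hk) (Finset.mem_range.2 hlt')
    refine le_trans ?_ (hQpow k i j)
    rw [EReal.coe_le_coe_iff]
    have h2 : (N : ℝ) * (a - c₁) ≤ (k : ℝ) * (a - c₁) := by
      apply mul_le_mul_of_nonneg_right _ (by linarith)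
      exact_mod_cast hkN
    linarith
  -- the inverse candidate M'
  set M' : Matrix (Fin d) (Fin d) R := Matrix.of (fun i j => ∑' k : ℕ, ((1 - M)^k) i j)
    with hM'def
  have hM'apply : ∀ i j, M' i j = ∑' k : ℕ, ((1 - M)^k) i j := fun i j => rfl
  have hM'ent : ∀ i j, ((-c₁ : ℝ) : EReal) ≤ val (M' i j) := by
    intro i j
    rw [hM'apply]
    refine aux_val_hasSum val hbasis hzero hadd (hQsummable i j).hasSum fun k => ?_
    refine le_trans ?_ (hQpow k i j)
    rw [EReal.coe_le_coe_iff]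
    nlinarith [Nat.cast_nonneg (α := ℝ) k]
  -- partial sums and tails
  set S : ℕ → Matrix (Fin d) (Fin d) R := fun n => ∑ k ∈ Finset.range n, (1 - M)^k with hSdef
  have hSapply : ∀ n i j, S n i j = ∑ k ∈ Finset.range n, ((1 - M)^k) i j := by
    intro n i j
    rw [hSdef]
    exact Matrix.sum_apply i j _ _
  have htail : ∀ (n : ℕ) (i j : Fin d), ((-c₁ + (n:ℝ) * (a - c₁) : ℝ) : EReal) ≤ val ((M' - S n) i j) := by
    intro n i j
    have hsub : (M' - S n) i j = ∑' k : ℕ, ((1 - M)^(k + n)) i j := by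
      have h := Summable.sum_add_tsum_nat_add (f := fun k : ℕ => ((1 - M)^k) i j) n (hQsummable i j)
      rw [Matrix.sub_apply, hM'apply, hSapply, ← h]
      exact add_sub_cancel_left _ _
    rw [hsub]
    refine aux_val_hasSum val hbasis hzero hadd (Summable.hasSum ?_) fun k => ?_
    · exact (summable_nat_add_iff n).2 (hQsummable i j)
    · refine le_trans ?_ (hQpow (k+n) i j)
      rw [EReal.coe_le_coe_iff]
      have h1 : (n : ℝ) * (a - c₁) ≤ ((k + n : ℕ) : ℝ) * (a - c₁) := by
        apply mul_le_mul_of_nonneg_right _ (by linarith)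
        push_cast
        linarith [Nat.cast_nonneg (α := ℝ) k]
      linarith
  -- geometric series identities
  have hMS : ∀ n, M * S n = 1 - (1 - M)^n := by
    intro n
    have h := mul_neg_geom_sum (1 - M) n
    rw [sub_sub_cancel] at h
    rw [hSdef]
    exact h
  have hSM : ∀ n, S n * M = 1 - (1 - M)^n := by
    intro n
    have h := geom_sum_mul_neg (1 - M) n
    rw [sub_sub_cancel] at h
    rw [hSdef]
    exact h
  -- a criterion for val x = ⊤
  have hval_top : ∀ x : R,
      (∀ c : ℝ, ∃ r : ℝ, c < r ∧ ((r : ℝ) : EReal) ≤ val x) → val x = ⊤ := by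
    intro x hx
    by_contra hne
    have hlt : val x < ⊤ := lt_of_le_of_ne le_top hne
    obtain ⟨c, hc, -⟩ := EReal.exists_between_coe_real hlt
    obtain ⟨r, hr1, hr2⟩ := hx c
    have : ((c : ℝ) : EReal) < ((r : ℝ) : EReal) := EReal.coe_lt_coe_iff.2 hr1
    exact absurd (lt_of_lt_of_le (lt_trans hc this) hr2) (lt_irrefl _)
  -- choosing a large n for a given real c
  have hbign : ∀ c : ℝ, ∃ n : ℕ, c + 3*c₁ < (n:ℝ) * (a - c₁) := by
    intro c
    obtain ⟨n, hn⟩ := exists_nat_gt ((c + 3*c₁) / (a - c₁))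
    refine ⟨n, ?_⟩
    have h1 : (c + 3*c₁) / (a - c₁) * (a - c₁) < (n:ℝ) * (a - c₁) :=
      mul_lt_mul_of_pos_right hn (by linarith)
    rw [div_mul_cancel₀ _ (by linarith : a - c₁ ≠ 0)] at h1
    exact h1
  -- M * M' = 1
  have hMM' : M * M' = 1 := by
    have key : ∀ i j, val ((M * M' - 1) i j) = ⊤ := by
      intro i j
      refine hval_top _ fun c => ?_
      obtain ⟨n, hn⟩ := hbign c
      have hdec : M * M' - 1 = M * (M' - S (n+1)) + (M - 1) * (1 - M)^n := by
        have h1 : M * S (n+1) - 1 = -((1 - M)^(n+1)) := by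
          rw [hMS (n+1)]
          exact sub_sub_cancel_left _ _
        have h2 : -((1 - M)^(n+1) : Matrix (Fin d) (Fin d) R) = (M - 1) * (1 - M)^n := by
          rw [pow_succ', ← neg_mul, neg_sub]
        calc M * M' - 1 = M * (M' - S (n+1)) + (M * S (n+1) - 1) := by
              rw [mul_sub]; abel
          _ = M * (M' - S (n+1)) + (M - 1) * (1 - M)^n := by rw [h1, h2]
      have hterm1 := aux_mval_mul val hzero hmul hadd hMent (htail (n+1))
      have hterm2 := aux_mval_mul val hzero hmul hadd hM1ent (hQpow n)
      set b1 : ℝ := -(2*c₁) + (-c₁ + ((n+1 : ℕ):ℝ) * (a - c₁)) with hb1def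
      set b2 : ℝ := (a - c₁) + (-c₁ + (n:ℝ) * (a - c₁)) with hb2def
      refine ⟨min b1 b2, ?_, ?_⟩
      · rw [lt_min_iff]
        constructor
        · rw [hb1def]; push_cast; nlinarith [hn]
        · rw [hb2def]; nlinarith [hn]
      · have hb1 : ((b1 : ℝ) : EReal) ≤ val ((M * (M' - S (n+1))) i j) :=
          le_trans (le_of_eq (coe2 _ _)) (hterm1 i j)
        have hb2 : ((b2 : ℝ) : EReal) ≤ val (((M - 1) * (1 - M)^n) i j) :=
          le_trans (le_of_eq (coe2 _ _)) (hterm2 i j)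
        have hmin : ((min b1 b2 : ℝ) : EReal) ≤
            min (val ((M * (M' - S (n+1))) i j)) (val (((M - 1) * (1 - M)^n) i j)) := by
          refine le_min ?_ ?_
          · exact le_trans (EReal.coe_le_coe_iff.2 (min_le_left _ _)) hb1
          · exact le_trans (EReal.coe_le_coe_iff.2 (min_le_right _ _)) hb2
        refine le_trans hmin ?_
        rw [hdec, Matrix.add_apply]
        exact hadd _ _
    have hmz : M * M' - 1 = 0 := Matrix.ext fun i j => by
      rw [(hzero _).1 (key i j), Matrix.zero_apply]
    exact sub_eq_zero.1 hmz
  -- M' * M = 1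
  have hM'M : M' * M = 1 := by
    have key : ∀ i j, val ((M' * M - 1) i j) = ⊤ := by
      intro i j
      refine hval_top _ fun c => ?_
      obtain ⟨n, hn⟩ := hbign c
      have hdec : M' * M - 1 = (M' - S (n+1)) * M + (1 - M)^n * (M - 1) := by
        have h1 : S (n+1) * M - 1 = -((1 - M)^(n+1)) := by
          rw [hSM (n+1)]
          exact sub_sub_cancel_left _ _
        have h2 : -((1 - M)^(n+1) : Matrix (Fin d) (Fin d) R) = (1 - M)^n * (M - 1) := by
          rw [pow_succ, ← mul_neg, neg_sub]
        calc M' * M - 1 = (M' - S (n+1)) * M + (S (n+1) * M - 1) := by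
              rw [sub_mul]; abel
          _ = (M' - S (n+1)) * M + (1 - M)^n * (M - 1) := by rw [h1, h2]
      have hterm1 := aux_mval_mul val hzero hmul hadd (htail (n+1)) hMent
      have hterm2 := aux_mval_mul val hzero hmul hadd (hQpow n) hM1ent
      set b1 : ℝ := (-c₁ + ((n+1 : ℕ):ℝ) * (a - c₁)) + -(2*c₁) with hb1def
      set b2 : ℝ := (-c₁ + (n:ℝ) * (a - c₁)) + (a - c₁) with hb2def
      refine ⟨min b1 b2, ?_, ?_⟩
      · rw [lt_min_iff]
        constructor
        · rw [hb1def]; push_cast; nlinarith [hn]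
        · rw [hb2def]; nlinarith [hn]
      · have hb1 : ((b1 : ℝ) : EReal) ≤ val (((M' - S (n+1)) * M) i j) :=
          le_trans (le_of_eq (coe2 _ _)) (hterm1 i j)
        have hb2 : ((b2 : ℝ) : EReal) ≤ val (((1 - M)^n * (M - 1)) i j) :=
          le_trans (le_of_eq (coe2 _ _)) (hterm2 i j)
        have hmin : ((min b1 b2 : ℝ) : EReal) ≤
            min (val (((M' - S (n+1)) * M) i j)) (val (((1 - M)^n * (M - 1)) i j)) := by
          refine le_min ?_ ?_
          · exact le_trans (EReal.coe_le_coe_iff.2 (min_le_left _ _)) hb1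
          · exact le_trans (EReal.coe_le_coe_iff.2 (min_le_right _ _)) hb2
        refine le_trans hmin ?_
        rw [hdec, Matrix.add_apply]
        exact hadd _ _
    have hmz : M' * M - 1 = 0 := Matrix.ext fun i j => by
      rw [(hzero _).1 (key i j), Matrix.zero_apply]
    exact sub_eq_zero.1 hmz
  -- the final cocycle bound
  have hfinal : ∀ τ : H, ∀ i j, ((a + 1 : ℝ) : EReal) ≤
      val ((M' * U τ * (M.map (ρ τ)) - 1) i j) := by
    intro τ
    have hrep : ∀ σ : H, ∃! t, t ∈ T ∧ σ⁻¹ * t ∈ V.toSubgroup := fun σ =>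
      hTrans σ (Subgroup.mem_top σ)
    set e : H → H := fun σ => Classical.choose (hrep σ) with hedef
    have heT : ∀ σ, e σ ∈ T := fun σ => (Classical.choose_spec (hrep σ)).1.1
    have heH : ∀ σ, σ⁻¹ * e σ ∈ V.toSubgroup := fun σ => (Classical.choose_spec (hrep σ)).1.2
    have heuniq : ∀ σ t, t ∈ T → σ⁻¹ * t ∈ V.toSubgroup → t = e σ := fun σ t h1 h2 =>
      (Classical.choose_spec (hrep σ)).2 t ⟨h1, h2⟩
    have hhH : ∀ σ : H, (e (τ*σ))⁻¹ * (τ*σ) ∈ V.toSubgroup := by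
      intro σ
      have h1 := V.toSubgroup.inv_mem (heH (τ*σ))
      simpa [mul_inv_rev, inv_inv] using h1
    have hterm : ∀ σ : H, ρ (τ*σ) α • U (τ*σ)
        = ρ (e (τ*σ)) α •
          (U (e (τ*σ)) * ((U ((e (τ*σ))⁻¹ * (τ*σ))).map (ρ (e (τ*σ))))) := by
      intro σ
      have hfact : τ * σ = e (τ*σ) * ((e (τ*σ))⁻¹ * (τ*σ)) := by group
      have hα : ρ (τ*σ) α = ρ (e (τ*σ)) α := by
        conv_lhs => rw [hfact]
        rw [map_mul ρ]
        have h2 : ρ ((e (τ*σ))⁻¹ * (τ*σ)) α = α := hαinv _ (hhH σ)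
        calc (ρ (e (τ*σ)) * ρ ((e (τ*σ))⁻¹ * (τ*σ))) α
            = ρ (e (τ*σ)) (ρ ((e (τ*σ))⁻¹ * (τ*σ)) α) := rfl
          _ = ρ (e (τ*σ)) α := by rw [h2]
      have hU : U (τ*σ) = U (e (τ*σ)) * ((U ((e (τ*σ))⁻¹ * (τ*σ))).map (ρ (e (τ*σ)))) := by
        conv_lhs => rw [hfact]
        exact hUcoc _ _
      rw [hα, hU]
    have hUτM : U τ * M.map (ρ τ) = ∑ σ ∈ T, ρ (τ*σ) α • U (τ*σ) := by
      rw [hMdef]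
      have hmapsum : ((∑ σ ∈ T, ρ σ α • U σ).map (ρ τ) : Matrix (Fin d) (Fin d) R)
          = ∑ σ ∈ T, (ρ (τ*σ) α) • (U σ).map (ρ τ) := by
        ext i j
        rw [Matrix.map_apply, Matrix.sum_apply, Matrix.sum_apply, map_sum]
        refine Finset.sum_congr rfl fun σ _ => ?_
        rw [Matrix.smul_apply, smul_eq_mul, map_mul, Matrix.smul_apply, smul_eq_mul,
          Matrix.map_apply]
        congr 1
        rw [map_mul ρ]
        rfl
      rw [hmapsum, Finset.mul_sum]
      refine Finset.sum_congr rfl fun σ _ => ?_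
      rw [mul_smul_comm, ← hUcoc τ σ]
    have hMreindex : M = ∑ σ ∈ T, ρ (e (τ*σ)) α • U (e (τ*σ)) := by
      rw [hMdef]
      refine (Finset.sum_bij' (fun (σ : H) (_ : σ ∈ T) => e (τ*σ))
        (fun (t : H) (_ : t ∈ T) => e (τ⁻¹*t)) ?_ ?_ ?_ ?_ ?_).symm
      · intro σ _
        exact heT _
      · intro t _
        exact heT _
      · intro σ hσ
        refine (heuniq (τ⁻¹ * e (τ*σ)) σ hσ ?_).symm
        have := hhH σ
        have h3 : (τ⁻¹ * e (τ*σ))⁻¹ * σ = (e (τ*σ))⁻¹ * (τ*σ) := by group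
        rw [h3]
        exact this
      · intro t ht
        refine (heuniq (τ * e (τ⁻¹*t)) t ht ?_).symm
        have h2 := V.toSubgroup.inv_mem (heH (τ⁻¹*t))
        have h4 : (e (τ⁻¹*t))⁻¹ * (τ⁻¹*t) ∈ V.toSubgroup := by
          simpa [mul_inv_rev, inv_inv] using h2
        have h5 : (τ * e (τ⁻¹*t))⁻¹ * t = (e (τ⁻¹*t))⁻¹ * (τ⁻¹*t) := by group
        rw [h5]
        exact h4
      · intro σ _
        rfl
    have hmapsub2 : ∀ g g' : H, ((U g' - 1).map (ρ g) : Matrix (Fin d) (Fin d) R)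
        = (U g').map (ρ g) - 1 := by
      intro g g'
      ext i j
      by_cases hij : i = j <;>
        simp [Matrix.map_apply, Matrix.sub_apply, Matrix.one_apply, hij, map_sub, map_one,
          map_zero]
    have hE : U τ * M.map (ρ τ) - M = ∑ σ ∈ T, ρ (e (τ*σ)) α •
        (U (e (τ*σ)) * ((U ((e (τ*σ))⁻¹ * (τ*σ)) - 1).map (ρ (e (τ*σ))))) := by
      rw [hUτM]
      conv_lhs => rw [hMreindex]
      rw [← Finset.sum_sub_distrib]
      refine Finset.sum_congr rfl fun σ _ => ?_
      rw [hterm σ, ← smul_sub]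
      congr 1
      rw [hmapsub2, mul_sub, mul_one]
    have hEent : ∀ i j, ((a + 1 + c₁ : ℝ) : EReal) ≤
        val ((U τ * M.map (ρ τ) - M) i j) := by
      intro i j
      rw [hE, Matrix.sum_apply]
      refine aux_val_sum val hzero hadd _ _ _ fun σ _ => ?_
      rw [Matrix.smul_apply, smul_eq_mul]
      have hprod : ∀ i' j', ((-c₁ : ℝ) : EReal) + ((b : ℝ) : EReal) ≤
          val ((U (e (τ*σ)) * ((U ((e (τ*σ))⁻¹ * (τ*σ)) - 1).map (ρ (e (τ*σ))))) i' j') := by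
        refine aux_mval_mul val hzero hmul hadd (hUent _) ?_
        intro i' j'
        rw [Matrix.map_apply, hunit]
        exact hVval _ (hhH σ) i' j'
      have := aux_val_mul val hmul (hραle (e (τ*σ)))
        (le_trans (le_of_eq (coe2 (-c₁) b)) (hprod i j))
      refine le_trans (le_of_eq ?_) this
      rw [← coe2]
      congr 1
      rw [hbdef]
      ring
    intro i j
    have hfin_eq : M' * U τ * (M.map (ρ τ)) - 1 = M' * (U τ * M.map (ρ τ) - M) := by
      rw [mul_sub, hM'M, mul_assoc]
    rw [hfin_eq]
    have := aux_mval_mul val hzero hmul hadd hM'ent hEent i j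
    refine le_trans (le_of_eq ?_) this
    rw [← coe2]
    congr 1
    ring
  refine ⟨M, M', hMM', hM'M, ?_, ?_⟩
  · exact le_iInf fun i => le_iInf fun j => hM1ent i j
  · intro τ
    exact le_iInf fun i => le_iInf fun j => hfinal τ i j
end
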